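/- arXiv:math/0403205 — 6 statements merged into one kernel-verified Lean document; each statement's English description precedes it below -/
import Mathlib

section
/- Let n ≥ 2, n = 2ν + ρ with ρ ∈ {0,1}, and let x_0,...,x_ν be defined by ((u+v)^{n+2} − u^{n+2} − v^{n+2})/(uv) = Σ_{j=0}^{ν} x_j (u+v)^{n−2j}(uv)^j. Then for each 0 ≤ j ≤ ν, x_j = (−1)^j·binomial(n−j+2, j+1) + Σ_{l=0}^{j−1} (−1)^{j+1+l}(l+1)·binomial(n−j+2, j−1−l). -/
open Finset Polynomial

private def yc (m j : ℕ) : ℚ :=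
  (-1) ^ j * ((m - j + 2).choose (j + 1) : ℚ) -
    (if j = 0 then 0 else (-1) ^ j * ((m - j).choose (j - 1) : ℚ))

private lemma choose_aux {m j : ℕ} (h : m < 2 * j) :
    (m - j + 2).choose (j + 1) = (m - j).choose (j - 1) := by
  by_cases h2 : m - j + 2 = j + 1
  · have e2 : m - j = j - 1 := by omega
    rw [h2, e2, Nat.choose_self, Nat.choose_self]
  · rw [Nat.choose_eq_zero_of_lt (by omega), Nat.choose_eq_zero_of_lt (by omega)]

private lemma yc_zero {m j : ℕ} (h : m < 2 * j) : yc m j = 0 := by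
  have hj : j ≠ 0 := by omega
  rw [yc, if_neg hj, choose_aux h]; ring

private lemma yc_rec (m j : ℕ) : yc (m + 2) (j + 1) = yc (m + 1) (j + 1) - yc m j := by
  rcases le_or_gt (2 * j) m with hle | hlt
  · have e1 : m + 2 - (j + 1) = (m - j) + 1 := by omega
    have e2 : m + 1 - (j + 1) = m - j := by omega
    rw [yc, yc, yc, e1, e2, if_neg (Nat.succ_ne_zero j), if_neg (Nat.succ_ne_zero j)]
    simp only [Nat.add_sub_cancel]
    rcases j with _ | k
    · simp only [if_pos rfl]
      rw [show m - 0 + 1 + 2 = (m - 0 + 2) + 1 from rfl,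
        Nat.choose_succ_succ' (m - 0 + 2) 1]
      push_cast
      simp [Nat.choose_one_right]
      ring
    · rw [if_neg (Nat.succ_ne_zero k)]
      simp only [Nat.add_sub_cancel]
      rw [show m - (k + 1) + 1 + 2 = (m - (k + 1) + 2) + 1 from by omega,
        Nat.choose_succ_succ' (m - (k + 1) + 2) (k + 1 + 1),
        Nat.choose_succ_succ' (m - (k + 1)) k]
      push_cast
      ring
  · rw [yc_zero (by omega), yc_zero (by omega), yc_zero (by omega)]; ring

private lemma yc_zero' (m : ℕ) : yc m 0 = ((m + 2 : ℕ) : ℚ) := by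
  simp [yc, Nat.choose_one_right]

private lemma F_lemma : ∀ m : ℕ, ∀ u : ℚ,
    ∑ j ∈ range (m + 1), yc m j * u ^ (j + 1) * (u + 1) ^ (m - 2 * j)
      = (u + 1) ^ (m + 2) - u ^ (m + 2) - 1 := by
  intro m
  induction m using Nat.twoStepInduction with
  | zero =>
    intro u
    simp [yc]
    ring
  | one =>
    intro u
    rw [Finset.sum_range_succ, Finset.sum_range_one]
    have h1 : yc 1 1 = 0 := yc_zero (by omega)
    have h0 : yc 1 0 = 3 := by norm_num [yc]
    rw [h0, h1]
    ring
  | more m ih ih1 =>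
    intro u
    rw [Finset.sum_range_succ']
    have step1 : ∀ j ∈ range (m + 2),
        yc (m+2) (j+1) * u ^ (j+1+1) * (u+1) ^ (m + 2 - 2 * (j+1))
          = yc (m+1) (j+1) * u ^ (j+2) * (u+1) ^ (m - 2*j)
            - yc m j * u ^ (j+2) * (u+1) ^ (m - 2*j) := by
      intro j _
      rw [show m + 2 - 2 * (j+1) = m - 2*j from by omega, yc_rec]
      ring
    rw [Finset.sum_congr rfl step1, Finset.sum_sub_distrib]
    -- second sum = u * (previous)
    have hsecond : ∑ j ∈ range (m + 2), yc m j * u ^ (j+2) * (u+1) ^ (m - 2*j)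
        = u * ((u + 1) ^ (m + 2) - u ^ (m + 2) - 1) := by
      rw [Finset.sum_range_succ, yc_zero (by omega), ← ih u, Finset.mul_sum]
      rw [zero_mul, zero_mul, add_zero]
      exact Finset.sum_congr rfl fun j _ => by ring
    -- first sum
    have hfirst : ∑ j ∈ range (m + 2), yc (m+1) (j+1) * u ^ (j+2) * (u+1) ^ (m - 2*j)
        = (u + 1) * ((u + 1) ^ (m + 3) - u ^ (m + 3) - 1
            - ((m + 3 : ℕ) : ℚ) * u * (u+1) ^ (m+1)) := by
      rw [Finset.sum_range_succ, yc_zero (show m + 1 < 2 * (m + 2) by omega)]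
      rw [zero_mul, zero_mul, add_zero]
      have expand : ∀ j ∈ range (m+1),
          yc (m+1) (j+1) * u ^ (j+2) * (u+1) ^ (m - 2*j)
            = (u+1) * (yc (m+1) (j+1) * u ^ (j+1+1) * (u+1) ^ (m + 1 - 2 * (j+1))) := by
        intro j hj
        rcases le_or_gt (2 * j + 1) m with hle | hlt
        · rw [show m - 2*j = (m + 1 - 2*(j+1)) + 1 from by omega, pow_succ]
          ring
        · rw [yc_zero (show m + 1 < 2 * (j + 1) by omega)]
          ring
      rw [Finset.sum_congr rfl expand, ← Finset.mul_sum]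
      congr 1
      have := ih1 u
      rw [Finset.sum_range_succ'] at this
      have h0 : yc (m+1) 0 * u ^ (0+1) * (u+1) ^ (m + 1 - 2*0)
          = ((m + 3 : ℕ) : ℚ) * u * (u+1) ^ (m+1) := by
        rw [yc_zero' (m+1)]
        push_cast
        ring
      rw [h0] at this
      linarith [this]
    rw [hfirst, hsecond, yc_zero' (m+2)]
    push_cast
    ring

private lemma coeff_term (a : ℚ) (k e d : ℕ) :
    (C a * X ^ k * (X + 1) ^ e).coeff d =
      a * (if k ≤ d then (e.choose (d - k) : ℚ) else 0) := by
  rw [mul_right_comm, Polynomial.coeff_mul_X_pow']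
  split
  · rw [Polynomial.coeff_C_mul, Polynomial.coeff_X_add_one_pow]
  · rw [mul_zero]

private lemma A_lemma (m r : ℕ) :
    ∑ k ∈ range (r + 1), (-1 : ℚ) ^ k * ((m + 1).choose k : ℚ)
      = (-1) ^ r * (m.choose r : ℚ) := by
  induction r with
  | zero => simp
  | succ r ih =>
    rw [Finset.sum_range_succ, ih, Nat.choose_succ_succ m r]
    push_cast
    ring

private lemma B_lemma (m j : ℕ) :
    ∑ k ∈ range j, (-1 : ℚ) ^ k * ((j - k : ℕ) : ℚ) * ((m + 2).choose k : ℚ) =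
      if j = 0 then 0 else (-1) ^ (j - 1) * (m.choose (j - 1) : ℚ) := by
  induction j with
  | zero => simp
  | succ j ih =>
    rw [if_neg (Nat.succ_ne_zero j), Nat.add_sub_cancel]
    have split : ∀ k ∈ range (j + 1),
        (-1 : ℚ) ^ k * ((j + 1 - k : ℕ) : ℚ) * ((m + 2).choose k : ℚ)
          = (-1 : ℚ) ^ k * ((j - k : ℕ) : ℚ) * ((m + 2).choose k : ℚ)
            + (-1 : ℚ) ^ k * ((m + 2).choose k : ℚ) := by
      intro k hk
      have hkj : k ≤ j := by simpa [Nat.lt_succ_iff] using hk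
      have e : ((j + 1 - k : ℕ) : ℚ) = ((j - k : ℕ) : ℚ) + 1 := by
        have : j + 1 - k = (j - k) + 1 := by omega
        rw [this]; push_cast; ring
      rw [e]; ring
    rw [Finset.sum_congr rfl split, Finset.sum_add_distrib, A_lemma (m + 1) j]
    rw [Finset.sum_range_succ, Nat.sub_self, Nat.cast_zero, mul_zero, zero_mul, add_zero, ih]
    rcases j with _ | i
    · simp
    · rw [if_neg (Nat.succ_ne_zero i), Nat.add_sub_cancel]
      rw [Nat.choose_succ_succ' m i]
      push_cast
      ring

private lemma yc_formula (n j : ℕ) :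
    (-1 : ℚ) ^ j * ((n - j + 2).choose (j + 1) : ℚ) +
      ∑ l ∈ Finset.range j,
        (-1 : ℚ) ^ (j + 1 + l) * (l + 1 : ℚ) * ((n - j + 2).choose (j - 1 - l) : ℚ)
      = yc n j := by
  have hrefl := Finset.sum_range_reflect
    (fun k => (-1 : ℚ) ^ k * ((j - k : ℕ) : ℚ) * ((n - j + 2).choose k : ℚ)) j
  have hsum : ∑ l ∈ Finset.range j,
      (-1 : ℚ) ^ (j + 1 + l) * (l + 1 : ℚ) * ((n - j + 2).choose (j - 1 - l) : ℚ)
      = ∑ k ∈ range j, (-1 : ℚ) ^ k * ((j - k : ℕ) : ℚ) * ((n - j + 2).choose k : ℚ) := by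
    rw [← hrefl]
    apply Finset.sum_congr rfl
    intro l hl
    have hlj : l < j := Finset.mem_range.mp hl
    have e1 : j - (j - 1 - l) = l + 1 := by omega
    have e2 : (-1 : ℚ) ^ (j - 1 - l) = (-1 : ℚ) ^ (j + 1 + l) := by
      rw [show j + 1 + l = (j - 1 - l) + 2 * (l + 1) from by omega, pow_add, pow_mul]
      norm_num
    rw [e1, e2]
    push_cast
    ring
  have hB := B_lemma (n - j) j
  rw [show n - j + 2 = (n - j) + 2 from rfl] at hsum ⊢
  rw [hsum, hB, yc]
  rcases j with _ | i
  · simp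
  · rw [if_neg (Nat.succ_ne_zero i), if_neg (Nat.succ_ne_zero i), Nat.add_sub_cancel]
    ring

/-- Explicit formula (Remark 3.9) for the coefficients `x_j` defined by
`((u+v)^{n+2} − u^{n+2} − v^{n+2}) = uv · ∑_{j=0}^{ν} x_j (u+v)^{n−2j}(uv)^j`:
`x_j = (−1)^j C(n−j+2, j+1) + ∑_{l=0}^{j−1} (−1)^{j+1+l}(l+1) C(n−j+2, j−1−l)`. -/
theorem x_j_formula (n ν ρ : ℕ) (hn : 2 ≤ n) (hρ : ρ ≤ 1) (hnν : n = 2 * ν + ρ)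
    (x : ℕ → ℚ)
    (hx : ∀ u v : ℚ, (u + v) ^ (n + 2) - u ^ (n + 2) - v ^ (n + 2) =
      u * v * ∑ j ∈ Finset.range (ν + 1), x j * (u + v) ^ (n - 2 * j) * (u * v) ^ j) :
    ∀ j ≤ ν, x j = (-1) ^ j * ((n - j + 2).choose (j + 1) : ℚ) +
      ∑ l ∈ Finset.range j,
        (-1) ^ (j + 1 + l) * (l + 1 : ℚ) * ((n - j + 2).choose (j - 1 - l) : ℚ) := by
  have hD : (∑ j ∈ range (ν + 1), C (x j - yc n j) * X ^ (j + 1) * (X + 1) ^ (n - 2 * j)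
      : ℚ[X]) = 0 := by
    apply Polynomial.funext
    intro u
    rw [Polynomial.eval_zero]
    have e1 : Polynomial.eval u
        (∑ j ∈ range (ν + 1), C (x j - yc n j) * X ^ (j + 1) * (X + 1) ^ (n - 2 * j))
        = ∑ j ∈ range (ν + 1), (x j - yc n j) * u ^ (j + 1) * (u + 1) ^ (n - 2 * j) := by
      rw [Polynomial.eval_finset_sum]
      apply Finset.sum_congr rfl
      intro j _
      simp
    rw [e1]
    have hx1 := hx u 1
    simp only [one_pow, mul_one] at hx1
    have hxsum : ∑ j ∈ range (ν + 1), x j * u ^ (j + 1) * (u + 1) ^ (n - 2 * j)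
        = (u + 1) ^ (n + 2) - u ^ (n + 2) - 1 := by
      rw [hx1, Finset.mul_sum]
      exact Finset.sum_congr rfl fun j _ => by ring
    have hysum : ∑ j ∈ range (ν + 1), yc n j * u ^ (j + 1) * (u + 1) ^ (n - 2 * j)
        = (u + 1) ^ (n + 2) - u ^ (n + 2) - 1 := by
      rw [← F_lemma n u]
      apply Finset.sum_subset (Finset.range_subset_range.2 (by omega))
      intro j hj hj'
      rw [yc_zero (by simp only [Finset.mem_range] at hj hj'; omega)]
      ring
    have : ∑ j ∈ range (ν + 1), (x j - yc n j) * u ^ (j + 1) * (u + 1) ^ (n - 2 * j)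
        = (∑ j ∈ range (ν + 1), x j * u ^ (j + 1) * (u + 1) ^ (n - 2 * j))
          - ∑ j ∈ range (ν + 1), yc n j * u ^ (j + 1) * (u + 1) ^ (n - 2 * j) := by
      rw [← Finset.sum_sub_distrib]
      exact Finset.sum_congr rfl fun j _ => by ring
    rw [this, hxsum, hysum, sub_self]
  have hcoeff : ∀ d : ℕ,
      ∑ j ∈ range (ν + 1), (x j - yc n j) *
        (if j + 1 ≤ d then ((n - 2 * j).choose (d - (j + 1)) : ℚ) else 0) = 0 := by
    intro d
    have := congrArg (fun p : ℚ[X] => p.coeff d) hD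
    simpa only [Polynomial.finset_sum_coeff, coeff_term, Polynomial.coeff_zero] using this
  have key : ∀ j, j ≤ ν → x j = yc n j := by
    intro j
    induction j using Nat.strong_induction_on with
    | _ j ih =>
      intro hj
      have h := hcoeff (j + 1)
      rw [Finset.sum_eq_single_of_mem j (Finset.mem_range.mpr (by omega))] at h
      · rw [if_pos le_rfl, Nat.sub_self, Nat.choose_zero_right, Nat.cast_one, mul_one,
          sub_eq_zero] at h
        exact h
      · intro b hb hbj
        rcases lt_or_gt_of_ne hbj with hlt | hgt
        · rw [ih b hlt (by omega), sub_self, zero_mul]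
        · rw [if_neg (by omega), mul_zero]
  intro j hj
  rw [key j hj, ← yc_formula n j]
end

section
/- Let n ≥ 2, n = 2ν + ρ with ρ ∈ {0,1}, define q(y) = Σ_{j=0}^{ν} x_j y^{ν−j} where the x_j are given by the identity ((u+v)^{n+2} − u^{n+2} − v^{n+2})/(uv) = Σ_{j=0}^{ν} x_j (u+v)^{n−2j}(uv)^j. Then q(2) equals: 2^{ν+1} if n ≡ 0 (mod 4); 2^{ν+1} + (−1)^{(n−1)/4} if n ≡ 1 (mod 4); 2^{ν+1} + 2·(−1)^{(n+6)/4} if n ≡ 2 (mod 4); and 2^{ν+1} + (−1)^{(n+5)/4} if n ≡ 3 (mod 4). In particular q(2) > 0 in all cases. -/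
/-- Value `q(2)` of the polynomial `q(y) = ∑_{j=0}^{ν} x_j y^{ν−j}`, where the `x_j`
are defined by `((u+v)^{n+2} − u^{n+2} − v^{n+2}) = uv ∑_j x_j (u+v)^{n−2j}(uv)^j`,
according to the residue of `n` mod 4; in particular `q(2) > 0`. -/
theorem q_at_two (n ν ρ : ℕ) (hn : 2 ≤ n) (hρ : ρ ≤ 1) (hnν : n = 2 * ν + ρ)
    (x : ℕ → ℚ)
    (hx : ∀ u v : ℚ, (u + v) ^ (n + 2) - u ^ (n + 2) - v ^ (n + 2) =
      u * v * ∑ j ∈ Finset.range (ν + 1), x j * (u + v) ^ (n - 2 * j) * (u * v) ^ j)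
    (q2 : ℚ) (hq2 : q2 = ∑ j ∈ Finset.range (ν + 1), x j * 2 ^ (ν - j)) :
    (n % 4 = 0 → q2 = 2 ^ (ν + 1)) ∧
    (n % 4 = 1 → q2 = 2 ^ (ν + 1) + (-1) ^ ((n - 1) / 4)) ∧
    (n % 4 = 2 → q2 = 2 ^ (ν + 1) + 2 * (-1) ^ ((n + 6) / 4)) ∧
    (n % 4 = 3 → q2 = 2 ^ (ν + 1) + (-1) ^ ((n + 5) / 4)) ∧
    0 < q2 := by
  -- lift the identity to ℂ
  have key : ∀ u v : ℂ, (u + v) ^ (n + 2) - u ^ (n + 2) - v ^ (n + 2) =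
      u * v * ∑ j ∈ Finset.range (ν + 1), (x j : ℂ) * (u + v) ^ (n - 2 * j) * (u * v) ^ j := by
    have hpoly : ((MvPolynomial.X 0 + MvPolynomial.X 1 : MvPolynomial (Fin 2) ℚ) ^ (n+2)
        - (MvPolynomial.X 0) ^ (n+2) - (MvPolynomial.X 1) ^ (n+2)) =
        MvPolynomial.X 0 * MvPolynomial.X 1 *
          ∑ j ∈ Finset.range (ν+1), MvPolynomial.C (x j) *
            (MvPolynomial.X 0 + MvPolynomial.X 1) ^ (n - 2*j) *
            (MvPolynomial.X 0 * MvPolynomial.X 1) ^ j := by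
      apply MvPolynomial.funext
      intro f
      simp only [map_sub, map_add, map_mul, map_pow, map_sum, MvPolynomial.eval_X,
        MvPolynomial.eval_C]
      exact hx (f 0) (f 1)
    intro u v
    have h := congrArg (MvPolynomial.aeval (R := ℚ) ![u, v]) hpoly
    simpa [map_sub, map_add, map_mul, map_pow, map_sum, MvPolynomial.aeval_X,
      MvPolynomial.aeval_C, eq_ratCast] using h
  have hν1 : 1 ≤ ν := by omega
  have hs : (1 + Complex.I) + (1 - Complex.I) = 2 := by ring
  have hp : (1 + Complex.I) * (1 - Complex.I) = 2 := by
    linear_combination (-1 : ℂ) * Complex.I_sq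
  have ha : (1 + Complex.I)^4 = -4 := by
    linear_combination (Complex.I^2 + 4*Complex.I + 5) * Complex.I_sq
  have hb : (1 - Complex.I)^4 = -4 := by
    linear_combination (Complex.I^2 - 4*Complex.I + 5) * Complex.I_sq
  have hc2 : (1 + Complex.I)^2 + (1 - Complex.I)^2 = 0 := by
    linear_combination (2:ℂ) * Complex.I_sq
  have hc3 : (1 + Complex.I)^3 + (1 - Complex.I)^3 = -4 := by
    linear_combination (6:ℂ) * Complex.I_sq
  have hc5 : (1 + Complex.I)^5 + (1 - Complex.I)^5 = -8 := by
    linear_combination (10*Complex.I^2 + 10) * Complex.I_sq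
  have hmain := key (1 + Complex.I) (1 - Complex.I)
  rw [hs, hp] at hmain
  -- rewrite the sum
  have hsum : ∑ j ∈ Finset.range (ν + 1), (x j : ℂ) * 2 ^ (n - 2 * j) * 2 ^ j
      = 2 ^ (n - ν) * (q2 : ℂ) := by
    rw [hq2]; push_cast; rw [Finset.mul_sum]
    apply Finset.sum_congr rfl
    intro j hj
    have hj' : j ≤ ν := Nat.lt_succ_iff.mp (Finset.mem_range.mp hj)
    have he : (2:ℂ) ^ (n - 2*j) * 2 ^ j = 2 ^ (n - ν) * 2 ^ (ν - j) := by
      rw [← pow_add, ← pow_add]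
      congr 1
      omega
    calc (x j : ℂ) * 2 ^ (n - 2*j) * 2 ^ j = (x j : ℂ) * ((2:ℂ) ^ (n - 2*j) * 2 ^ j) := by ring
      _ = (x j : ℂ) * (2 ^ (n - ν) * 2 ^ (ν - j)) := by rw [he]
      _ = 2 ^ (n - ν) * ((x j : ℂ) * 2 ^ (ν - j)) := by ring
  rw [hsum] at hmain
  -- hmain : 2^(n+2) - (1+I)^(n+2) - (1-I)^(n+2) = 2 * (2^(n-ν) * q2)
  set k := n / 4 with hk
  have hncase : n % 4 = 0 ∨ n % 4 = 1 ∨ n % 4 = 2 ∨ n % 4 = 3 := by omega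
  have hq2pos : ∀ c : ℚ, q2 = 2 ^ (ν + 1) + c → -2 ≤ c → 0 < q2 := by
    intro c hc hcle
    have h4le : (2:ℚ)^2 ≤ 2 ^ (ν + 1) := by
      apply pow_le_pow_right₀ (by norm_num)
      omega
    rw [hc]; nlinarith
  have hm1 : ((-1:ℚ))^k = 1 ∨ ((-1:ℚ))^k = -1 := neg_one_pow_eq_or ℚ k
  -- per-case computation
  rcases hncase with hr | hr | hr | hr
  · -- n % 4 = 0
    have hn4 : n + 2 = 4 * k + 2 := by omega
    have hpow : (1 + Complex.I) ^ (n+2) + (1 - Complex.I) ^ (n+2) = 0 := by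
      rw [hn4, pow_add, pow_add, pow_mul, pow_mul, ha, hb]
      linear_combination (-4:ℂ)^k * hc2
    have hE : (2:ℂ)^(n+2) = 2 * (2^(n-ν) * (q2:ℚ)) := by
      have : (1 + Complex.I) ^ (n+2) + (1 - Complex.I) ^ (n+2) = 0 := hpow
      linear_combination hmain + this
    have hEq : (2:ℚ)^(n+2) = 2 * (2^(n-ν) * q2) := by exact_mod_cast hE
    have hval : q2 = 2 ^ (ν + 1) := by
      have hnν' : n - ν = ν := by omega
      rw [hnν', show n + 2 = (ν + 1) + (ν + 1) from by omega] at hEq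
      have h2 : ((2:ℚ)^(ν+1)) ≠ 0 := by positivity
      apply mul_left_cancel₀ h2
      calc (2:ℚ)^(ν+1) * q2 = 2 * (2^ν * q2) := by rw [pow_succ]; ring
        _ = 2^(ν+1) * 2^(ν+1) := by rw [← pow_add]; linarith [hEq]
    refine ⟨fun _ => hval, fun h => absurd h (by omega), fun h => absurd h (by omega),
      fun h => absurd h (by omega), hq2pos 0 (by rw [hval]; ring) (by norm_num)⟩
  · -- n % 4 = 1
    have hn4 : n + 2 = 4 * k + 3 := by omega
    have hνk : ν = 2 * k := by omega
    have hpow : (1 + Complex.I) ^ (n+2) + (1 - Complex.I) ^ (n+2) = -4 * (-4:ℂ)^k := by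
      rw [hn4, pow_add, pow_add, pow_mul, pow_mul, ha, hb]
      linear_combination (-4:ℂ)^k * hc3
    have hE : (2:ℂ)^(n+2) + 4 * (-4:ℂ)^k = 2 * (2^(n-ν) * (q2:ℚ)) := by
      linear_combination hmain + hpow
    have hEq : (2:ℚ)^(n+2) + 4 * (-4:ℚ)^k = 2 * (2^(n-ν) * q2) := by exact_mod_cast hE
    have hval : q2 = 2 ^ (ν + 1) + (-1:ℚ)^k := by
      have hnν' : n - ν = 2 * k + 1 := by omega
      rw [hnν', hn4] at hEq
      have h44 : ((-4:ℚ))^k = (-1)^k * 2^(2*k) := by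
        rw [neg_pow, show (4:ℚ) = 2^2 by norm_num, ← pow_mul]
      rw [h44] at hEq
      have h2 : ((2:ℚ)^(2*k+2)) ≠ 0 := by positivity
      apply mul_left_cancel₀ h2
      rw [hνk]
      calc (2:ℚ)^(2*k+2) * q2 = 2 * (2^(2*k+1) * q2) := by ring
        _ = 2^(4*k+3) + 4 * ((-1)^k * 2^(2*k)) := by linarith [hEq]
        _ = 2^(2*k+2) * (2 ^ (2*k+1) + (-1:ℚ)^k) := by ring
    have hkk : (n - 1) / 4 = k := by omega
    refine ⟨fun h => absurd h (by omega), fun _ => by rw [hval, hkk],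
      fun h => absurd h (by omega), fun h => absurd h (by omega),
      hq2pos ((-1:ℚ)^k) hval (by rcases hm1 with h|h <;> rw [h] <;> norm_num)⟩
  · -- n % 4 = 2
    have hn4 : n + 2 = 4 * k + 4 := by omega
    have hνk : ν = 2 * k + 1 := by omega
    have hpow : (1 + Complex.I) ^ (n+2) + (1 - Complex.I) ^ (n+2) = -8 * (-4:ℂ)^k := by
      rw [hn4, pow_add, pow_add, pow_mul, pow_mul, ha, hb]
      ring
    have hE : (2:ℂ)^(n+2) + 8 * (-4:ℂ)^k = 2 * (2^(n-ν) * (q2:ℚ)) := by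
      linear_combination hmain + hpow
    have hEq : (2:ℚ)^(n+2) + 8 * (-4:ℚ)^k = 2 * (2^(n-ν) * q2) := by exact_mod_cast hE
    have hval : q2 = 2 ^ (ν + 1) + 2 * (-1:ℚ)^k := by
      have hnν' : n - ν = 2 * k + 1 := by omega
      rw [hnν', hn4] at hEq
      have h44 : ((-4:ℚ))^k = (-1)^k * 2^(2*k) := by
        rw [neg_pow, show (4:ℚ) = 2^2 by norm_num, ← pow_mul]
      rw [h44] at hEq
      have h2 : ((2:ℚ)^(2*k+2)) ≠ 0 := by positivity
      apply mul_left_cancel₀ h2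
      rw [hνk]
      calc (2:ℚ)^(2*k+2) * q2 = 2 * (2^(2*k+1) * q2) := by ring
        _ = 2^(4*k+4) + 8 * ((-1)^k * 2^(2*k)) := by linarith [hEq]
        _ = 2^(2*k+2) * (2 ^ (2*k+1+1) + 2 * (-1:ℚ)^k) := by ring
    have hkk : (n + 6) / 4 = k + 2 := by omega
    have hm2 : ((-1:ℚ))^(k+2) = (-1:ℚ)^k := by rw [pow_add]; norm_num
    refine ⟨fun h => absurd h (by omega), fun h => absurd h (by omega),
      fun _ => by rw [hval, hkk, hm2],
      fun h => absurd h (by omega),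
      hq2pos (2*(-1:ℚ)^k) hval (by rcases hm1 with h|h <;> rw [h] <;> norm_num)⟩
  · -- n % 4 = 3
    have hn4 : n + 2 = 4 * k + 5 := by omega
    have hνk : ν = 2 * k + 1 := by omega
    have hpow : (1 + Complex.I) ^ (n+2) + (1 - Complex.I) ^ (n+2) = -8 * (-4:ℂ)^k := by
      rw [hn4, pow_add, pow_add, pow_mul, pow_mul, ha, hb]
      linear_combination (-4:ℂ)^k * hc5
    have hE : (2:ℂ)^(n+2) + 8 * (-4:ℂ)^k = 2 * (2^(n-ν) * (q2:ℚ)) := by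
      linear_combination hmain + hpow
    have hEq : (2:ℚ)^(n+2) + 8 * (-4:ℚ)^k = 2 * (2^(n-ν) * q2) := by exact_mod_cast hE
    have hval : q2 = 2 ^ (ν + 1) + (-1:ℚ)^k := by
      have hnν' : n - ν = 2 * k + 2 := by omega
      rw [hnν', hn4] at hEq
      have h44 : ((-4:ℚ))^k = (-1)^k * 2^(2*k) := by
        rw [neg_pow, show (4:ℚ) = 2^2 by norm_num, ← pow_mul]
      rw [h44] at hEq
      have h2 : ((2:ℚ)^(2*k+3)) ≠ 0 := by positivity
      apply mul_left_cancel₀ h2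
      rw [hνk]
      calc (2:ℚ)^(2*k+3) * q2 = 2 * (2^(2*k+2) * q2) := by ring
        _ = 2^(4*k+5) + 8 * ((-1)^k * 2^(2*k)) := by linarith [hEq]
        _ = 2^(2*k+3) * (2 ^ (2*k+1+1) + (-1:ℚ)^k) := by ring
    have hkk : (n + 5) / 4 = k + 2 := by omega
    have hm2 : ((-1:ℚ))^(k+2) = (-1:ℚ)^k := by rw [pow_add]; norm_num
    refine ⟨fun h => absurd h (by omega), fun h => absurd h (by omega),
      fun h => absurd h (by omega),
      fun _ => by rw [hval, hkk, hm2],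
      hq2pos ((-1:ℚ)^k) hval (by rcases hm1 with h|h <;> rw [h] <;> norm_num)⟩
end

section
/- Let n ≥ 2 be even, n = 2ν, and let q(y) = Σ_{j=0}^{ν} x_j y^{ν−j} be defined via ((u+v)^{n+2} − u^{n+2} − v^{n+2})/(uv) = Σ_{j=0}^{ν} x_j (u+v)^{n−2j}(uv)^j. Then for every 1 ≤ j ≤ ν−1, the j-th derivative satisfies q^{(j)}(2) = (j!/2^{j−1})·[2^ν·binomial(ν+1, j) − β_j], where β_j is the coefficient of y^j in the Chebyshev polynomial T_{ν+1}(y). -/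
/-!
Put `u = t`, `v = t⁻¹` with `t > 0` in the defining identity: then
`q((t + t⁻¹)²) = (t + t⁻¹)^{n+2} − t^{n+2} − t^{−(n+2)}`, and `t^m + t^{−m}` is the value of the
Chebyshev polynomial `C_m` (`C_m(2z) = 2 T_m(z)`) at `t² + t⁻² = (t + t⁻¹)² − 2`. Since
`(t + t⁻¹)²` is unbounded, `q = X^{ν+1} − C_{ν+1}(X − 2)`. So the Taylor coefficients of `q` at `2`
are `2^{ν+1−j} binom(ν+1, j) − 2^{1−j} β_j`, and `q^{(j)}(2)` is `j!` times that.
-/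

open Polynomial

namespace Polynomial

theorem coeff_comp_C_mul_X {R : Type*} [CommSemiring R] (p : R[X]) (a : R) (n : ℕ) :
    (p.comp (C a * X)).coeff n = a ^ n * p.coeff n := by
  induction p using Polynomial.induction_on' with
  | add p q hp hq => rw [add_comp, coeff_add, hp, hq, coeff_add, mul_add]
  | monomial k c =>
    rw [monomial_comp, mul_pow, ← C_pow, ← mul_assoc, ← C_mul, coeff_C_mul_X_pow, coeff_monomial]
    split_ifs <;> simp_all [mul_comm]

theorem iterate_derivative_eval_eq_factorial_mul_taylor_coeff {R : Type*} [CommSemiring R]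
    (f : R[X]) (r : R) (k : ℕ) :
    (derivative^[k] f).eval r = k.factorial * (taylor r f).coeff k := by
  rw [taylor_coeff, ← factorial_smul_hasseDeriv, LinearMap.smul_apply, eval_smul, nsmul_eq_mul]

theorem Chebyshev.coeff_C_mul_two_pow {R : Type*} [CommRing R] (n : ℤ) (j : ℕ) :
    (C R n).coeff j * 2 ^ j = 2 * (T R n).coeff j := by
  have h := congrArg (coeff · j) (Chebyshev.C_comp_two_mul_X R n)
  rw [show (2 : R[X]) = Polynomial.C 2 from rfl, coeff_comp_C_mul_X, coeff_C_mul] at h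
  rw [mul_comm, h]

end Polynomial

theorem chebyshev_T_real_eq_sum_of_cos (m N : ℕ) (β : ℕ → ℝ)
    (h : ∀ θ : ℝ, Real.cos (m * θ) = ∑ l ∈ Finset.range N, β l * Real.cos θ ^ l) :
    Chebyshev.T ℝ m = ∑ l ∈ Finset.range N, C (β l) * X ^ l := by
  refine eq_of_infinite_eval_eq _ _ (Set.Icc_infinite (by norm_num : (-1 : ℝ) < 1) |>.mono ?_)
  intro y hy
  rw [Set.mem_ofPred_eq, ← Real.cos_arccos hy.1 hy.2, Chebyshev.T_real_cos]
  simpa [eval_finsetSum] using h (Real.arccos y)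

theorem coeff_taylor_two_X_pow_sub_chebyshevC_comp {R : Type*} [CommRing R] (m j : ℕ) :
    (taylor (2 : R) (X ^ m - (Chebyshev.C R m).comp (X - C 2))).coeff j * 2 ^ j =
      2 ^ m * m.choose j - 2 * (Chebyshev.T R m).coeff j := by
  have hshift : (X - C 2 : R[X]).comp (X + C 2) = X := by
    rw [sub_comp, X_comp, C_comp, add_sub_cancel_right]
  rw [taylor_apply, sub_comp, X_pow_comp, comp_assoc, hshift, comp_X, coeff_sub, sub_mul,
    coeff_X_add_C_pow, Chebyshev.coeff_C_mul_two_pow]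
  rcases le_or_gt j m with h | h
  · rw [mul_right_comm, ← pow_add, Nat.sub_add_cancel h]
  · simp [Nat.choose_eq_zero_of_lt h]

theorem sum_C_mul_X_pow_eq_X_pow_sub_chebyshevC_comp (ν : ℕ) (x : ℕ → ℝ)
    (hx : ∀ u v : ℝ, (u + v) ^ (2 * ν + 2) - u ^ (2 * ν + 2) - v ^ (2 * ν + 2) =
      u * v * ∑ j ∈ Finset.range (ν + 1), x j * (u + v) ^ (2 * ν - 2 * j) * (u * v) ^ j) :
    ∑ j ∈ Finset.range (ν + 1), C (x j) * X ^ (ν - j) =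
      X ^ (ν + 1) - (Chebyshev.C ℝ (ν + 1)).comp (X - C 2) := by
  have hunbdd : ¬BddAbove ((fun t : ℝ => (t + t⁻¹) ^ 2) '' Set.Ioi 0) := by
    rw [not_bddAbove_iff]
    intro b
    refine ⟨_, ⟨|b| + 1, Set.mem_Ioi.2 (by positivity), rfl⟩, ?_⟩
    have : 0 < (|b| + 1)⁻¹ := by positivity
    nlinarith [le_abs_self b, abs_nonneg b]
  refine eq_of_infinite_eval_eq _ _ (Set.infinite_of_not_bddAbove hunbdd |>.mono ?_)
  rintro _ ⟨t, ht, rfl⟩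
  have htt : t * t⁻¹ = 1 := mul_inv_cancel₀ (ne_of_gt ht)
  have hC : (Chebyshev.C ℝ (ν + 1)).eval ((t + t⁻¹) ^ 2 - 2) =
      t ^ (2 * ν + 2) + t⁻¹ ^ (2 * ν + 2) := by
    have h := dickson_one_one_eval_add_inv (t ^ 2) (t⁻¹ ^ 2)
      (by rw [← mul_pow, htt, one_pow]) (ν + 1)
    rw [dickson_one_one_eq_chebyshev_C] at h
    push_cast at h
    rw [show (t + t⁻¹) ^ 2 - 2 = t ^ 2 + t⁻¹ ^ 2 by linear_combination 2 * htt, h]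
    ring
  simp only [Set.mem_ofPred_eq, eval_finsetSum, eval_mul, eval_C, eval_pow, eval_X, eval_sub,
    eval_comp, hC, ← pow_mul, mul_tsub]
  rw [show 2 * (ν + 1) = 2 * ν + 2 by ring, sub_add_eq_sub_sub, hx t t⁻¹, htt]
  simp

theorem q_deriv_at_two_even_general (n ν : ℕ) (hnν : n = 2 * ν)
    (x : ℕ → ℝ)
    (hx : ∀ u v : ℝ, (u + v) ^ (n + 2) - u ^ (n + 2) - v ^ (n + 2) =
      u * v * ∑ j ∈ Finset.range (ν + 1), x j * (u + v) ^ (n - 2 * j) * (u * v) ^ j)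
    (β : ℕ → ℝ)
    (hβ : ∀ θ : ℝ, Real.cos ((ν + 1) * θ) =
      ∑ l ∈ Finset.range (ν + 2), β l * (Real.cos θ) ^ l)
    (q : Polynomial ℝ)
    (hq : q = ∑ j ∈ Finset.range (ν + 1), C (x j) * X ^ (ν - j)) :
    ∀ j, 1 ≤ j → j ≤ ν - 1 →
      (derivative^[j] q).eval 2 =
        ((j.factorial : ℝ) / 2 ^ (j - 1)) * (2 ^ ν * ((ν + 1).choose j : ℝ) - β j) := by
  intro j hj1 hj2
  subst hnν hq
  have hT : (Chebyshev.T ℝ (ν + 1)).coeff j = β j := by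
    have h := chebyshev_T_real_eq_sum_of_cos (ν + 1) (ν + 2) β (by exact_mod_cast hβ)
    push_cast at h
    rw [h, finsetSum_coeff]
    simp only [coeff_C_mul_X_pow, Finset.sum_ite_eq, Finset.mem_range]
    exact if_pos (by omega)
  have htaylor := coeff_taylor_two_X_pow_sub_chebyshevC_comp (R := ℝ) (ν + 1) j
  push_cast at htaylor
  rw [hT, show (2 : ℝ) ^ j = 2 ^ (j - 1) * 2 by rw [← pow_succ, Nat.sub_add_cancel hj1]] at htaylor
  rw [iterate_derivative_eval_eq_factorial_mul_taylor_coeff,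
    sum_C_mul_X_pow_eq_X_pow_sub_chebyshevC_comp ν x hx]
  field_simp
  linear_combination htaylor / 2

/-- For `n = 2ν` even, with `q(y) = ∑_{j=0}^{ν} x_j y^{ν−j}` defined via the identity
`((u+v)^{n+2} − u^{n+2} − v^{n+2}) = uv ∑_j x_j (u+v)^{n−2j}(uv)^j`, the derivatives
of `q` at `2` satisfy `q^{(j)}(2) = (j!/2^{j−1})·(2^ν C(ν+1,j) − β_j)` for `1 ≤ j ≤ ν−1`,
where `β_j` is the `j`-th coefficient of the Chebyshev polynomial `T_{ν+1}`. -/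
theorem q_deriv_at_two_even (n ν : ℕ) (hn : 2 ≤ n) (hnν : n = 2 * ν)
    (x : ℕ → ℝ)
    (hx : ∀ u v : ℝ, (u + v) ^ (n + 2) - u ^ (n + 2) - v ^ (n + 2) =
      u * v * ∑ j ∈ Finset.range (ν + 1), x j * (u + v) ^ (n - 2 * j) * (u * v) ^ j)
    (β : ℕ → ℝ)
    (hβ : ∀ θ : ℝ, Real.cos ((ν + 1) * θ) =
      ∑ l ∈ Finset.range (ν + 2), β l * (Real.cos θ) ^ l)
    (q : Polynomial ℝ)
    (hq : q = ∑ j ∈ Finset.range (ν + 1), C (x j) * X ^ (ν - j)) :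
    ∀ j, 1 ≤ j → j ≤ ν - 1 →
      (derivative^[j] q).eval 2 =
        ((j.factorial : ℝ) / 2 ^ (j - 1)) * (2 ^ ν * ((ν + 1).choose j : ℝ) - β j) :=
  q_deriv_at_two_even_general n ν hnν x hx β hβ q hq
end

section
/- Let ν ≥ 1 and let q(y) = y^{ν+1} − 2·Σ_{l=0}^{ν+1} β_l ((y−2)/2)^l, where β_l are the coefficients of the Chebyshev polynomial T_{ν+1} (so that the subtracted term equals 2cos((ν+1)θ) when y − 2 = 2cos θ). Then for every 1 ≤ j ≤ ν−1, q^{(j)}(2) ≥ 2·j!·binomial(ν+1, j)·(2^{ν−j} − 1) > 0. -/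
open Polynomial

lemma cheb_coeff_bound (n : ℕ) :
    ∀ k : ℕ, |(Chebyshev.T ℝ n).coeff k| ≤ 2 ^ k * (n.choose k) := by
  induction n using Nat.twoStepInduction with
  | zero =>
    intro k
    rw [show ((0 : ℕ) : ℤ) = 0 from rfl, Chebyshev.T_zero]
    rcases k with - | k
    · simp
    · simp [coeff_one]
  | one =>
    intro k
    rw [show ((1 : ℕ) : ℤ) = 1 from rfl, Chebyshev.T_one]
    rcases k with - | k
    · simp
    rcases k with - | k
    · simp [coeff_X]
    · simp [coeff_X]
  | more n ih2 ih1 =>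
    intro k
    have hT : Chebyshev.T ℝ ((n + 2 : ℕ) : ℤ) =
        C 2 * (X * Chebyshev.T ℝ ((n + 1 : ℕ) : ℤ)) - Chebyshev.T ℝ (n : ℤ) := by
      have h := Chebyshev.T_add_two ℝ (n : ℤ)
      push_cast
      rw [h, (map_ofNat C 2).symm]
      ring
    rw [hT, coeff_sub, coeff_C_mul]
    rcases k with - | k
    · have h0 : (X * Chebyshev.T ℝ ((n + 1 : ℕ) : ℤ)).coeff 0 = 0 := by
        rw [mul_coeff_zero, coeff_X_zero, zero_mul]
      rw [h0]
      simpa using ih2 0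
    · rw [coeff_X_mul]
      calc |2 * (Chebyshev.T ℝ ((n+1:ℕ):ℤ)).coeff k - (Chebyshev.T ℝ (n:ℤ)).coeff (k+1)|
          ≤ 2 * |(Chebyshev.T ℝ ((n+1:ℕ):ℤ)).coeff k| + |(Chebyshev.T ℝ (n:ℤ)).coeff (k+1)| :=
            (abs_sub _ _).trans_eq (by rw [abs_mul]; norm_num)
        _ ≤ 2 * (2 ^ k * ((n+1).choose k)) + 2 ^ (k+1) * (n.choose (k+1)) := by
            gcongr
            · exact ih1 k
            · exact ih2 (k+1)
        _ ≤ 2 ^ (k+1) * ((n+2).choose (k+1)) := by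
            have h1 : (n+1).choose k + n.choose (k+1) ≤ (n+2).choose (k+1) := by
              rw [Nat.choose_succ_succ (n+1) k]
              exact Nat.add_le_add le_rfl (Nat.choose_le_choose _ (by omega))
            have h2 : (0:ℝ) ≤ 2 ^ k := by positivity
            have h3 := mul_le_mul_of_nonneg_left ((Nat.cast_le (α := ℝ)).2 h1) h2
            push_cast at h3
            rw [pow_succ]
            nlinarith [h3]


/-- Let `q(y) = y^{ν+1} − 2 ∑_{l=0}^{ν+1} β_l ((y−2)/2)^l`, where `β_l` are the
coefficients of the Chebyshev polynomial `T_{ν+1}`. Then for `1 ≤ j ≤ ν−1` one has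
`q^{(j)}(2) ≥ 2·j!·C(ν+1,j)·(2^{ν−j} − 1) > 0`. -/
theorem q_deriv_lower_bound (ν : ℕ) (hν : 1 ≤ ν) (β : ℕ → ℝ)
    (hβ : ∀ θ : ℝ, Real.cos ((ν + 1) * θ) =
      ∑ l ∈ Finset.range (ν + 2), β l * (Real.cos θ) ^ l)
    (q : Polynomial ℝ)
    (hq : q = X ^ (ν + 1) -
      C 2 * ∑ l ∈ Finset.range (ν + 2), C (β l / 2 ^ l) * (X - C 2) ^ l) :
    ∀ j, 1 ≤ j → j ≤ ν - 1 →
      (0 : ℝ) < 2 * (j.factorial : ℝ) * ((ν + 1).choose j : ℝ) * (2 ^ (ν - j) - 1) ∧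
      2 * (j.factorial : ℝ) * ((ν + 1).choose j : ℝ) * (2 ^ (ν - j) - 1) ≤
        (derivative^[j] q).eval 2 := by
  intro j hj1 hj2
  have hν2 : 2 ≤ ν := by omega
  have hjν : j + 1 ≤ ν := by omega
  -- identify β with Chebyshev coefficients
  set P : ℝ[X] := ∑ l ∈ Finset.range (ν + 2), C (β l) * X ^ l with hP
  have hPT : P = Chebyshev.T ℝ ((ν + 1 : ℕ) : ℤ) := by
    apply eq_of_infinite_eval_eq
    apply Set.Infinite.mono ?_ (Set.Icc_infinite (show (-1 : ℝ) < 1 by norm_num))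
    intro x hx
    have hc : Real.cos (Real.arccos x) = x := Real.cos_arccos hx.1 hx.2
    show P.eval x = _
    rw [← hc, Chebyshev.T_real_cos]
    have : P.eval (Real.cos (Real.arccos x)) =
        ∑ l ∈ Finset.range (ν + 2), β l * (Real.cos (Real.arccos x)) ^ l := by
      simp [hP, eval_finset_sum]
    rw [this, ← hβ (Real.arccos x)]
    push_cast
    ring_nf
  have hβj : β j ≤ 2 ^ j * ((ν + 1).choose j) := by
    have hc : P.coeff j = β j := by
      simp [hP, finset_sum_coeff, coeff_C_mul, coeff_X_pow]
      intro h
      omega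
    have hb := cheb_coeff_bound (ν + 1) j
    rw [← hPT, hc] at hb
    exact (le_abs_self _).trans hb
  -- compute the derivative
  have hd : (derivative^[j] q).eval 2 =
      ((ν + 1).descFactorial j : ℝ) * 2 ^ (ν + 1 - j) - 2 * (β j / 2 ^ j * j.factorial) := by
    rw [hq, iterate_derivative_sub, iterate_derivative_C_mul, iterate_derivative_sum]
    rw [eval_sub, eval_mul, eval_C]
    congr 1
    · rw [iterate_derivative_X_pow_eq_C_mul, eval_mul, eval_C, eval_pow, eval_X]
    · congr 1
      rw [eval_finset_sum]
      rw [Finset.sum_eq_single j]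
      · rw [iterate_derivative_C_mul, iterate_derivative_X_sub_pow, Nat.sub_self, pow_zero,
          eval_mul, eval_C, eval_smul, eval_one, Nat.descFactorial_self, nsmul_eq_mul, mul_one]
      · intro l hl hlj
        rw [iterate_derivative_C_mul, iterate_derivative_X_sub_pow, eval_mul, eval_C, eval_smul,
          eval_pow, eval_sub, eval_X, eval_C, sub_self]
        rcases lt_or_gt_of_ne hlj with h | h
        · simp [Nat.descFactorial_eq_zero_iff_lt.2 h]
        · simp [zero_pow (show l - j ≠ 0 by omega)]
      · intro h
        exact absurd (Finset.mem_range.2 (by omega)) h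
  rw [hd]
  have hdf : ((ν + 1).descFactorial j : ℝ) = (j.factorial : ℝ) * ((ν + 1).choose j : ℝ) := by
    rw_mod_cast [Nat.descFactorial_eq_factorial_mul_choose]
  have hpow : (2 : ℝ) ^ (ν + 1 - j) = 2 * 2 ^ (ν - j) := by
    rw [show ν + 1 - j = (ν - j) + 1 by omega, pow_succ]
    ring
  have hch : (0 : ℝ) < ((ν + 1).choose j : ℝ) := by
    exact_mod_cast Nat.choose_pos (by omega)
  have hfa : (1 : ℝ) ≤ (j.factorial : ℝ) := by exact_mod_cast j.factorial_pos
  have hp1 : (2 : ℝ) ≤ 2 ^ (ν - j) := by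
    calc (2:ℝ) = 2 ^ 1 := (pow_one 2).symm
    _ ≤ 2 ^ (ν - j) := pow_le_pow_right₀ (by norm_num) (by omega)
  constructor
  · have : (0:ℝ) < 2 ^ (ν - j) - 1 := by linarith
    positivity
  · rw [hdf, hpow]
    have hβj' : β j / 2 ^ j ≤ ((ν + 1).choose j : ℝ) := by
      rw [div_le_iff₀ (by positivity)]
      linarith [hβj]
    nlinarith [hβj', hfa, hch]
end

section
/- Let n ≥ 2, n = 2ν + ρ with ρ ∈ {0,1}, and let q(y) = Σ_{j=0}^{ν} x_j y^{ν−j} with x_j defined by ((u+v)^{n+2} − u^{n+2} − v^{n+2})/(uv) = Σ_{j=0}^{ν} x_j (u+v)^{n−2j}(uv)^j. Then q^{(j)}(2) > 0 for every 0 ≤ j ≤ ν. -/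
/-!
Put `u = a`, `v = a⁻¹` in the identity defining the `x_j`: with `w = a + a⁻¹` it reads
`q(w²) w^ρ = w^(n+2) - a^(n+2) - a^-(n+2)`. Writing `s = a² + a⁻² = w² - 2`, the right-hand
side is expressed through the Dickson polynomial `D_m(s) = a^(2m) + a^(-2m)` and the third-kind
Chebyshev polynomial `V_m` with `V_m(s) w = a^(2m+1) + a^-(2m+1)`, so that
`q(X + 2) = (X + 2)^(ν+1) - D_(ν+1) + ρ V_ν` as polynomials. Since `D` and `V` obey
`f (m+2) = X f (m+1) - f m`, the size of the coefficient of `X^j` in `f m` is bounded by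
`C(m - k, k)`, `k = ⌊(m - j)/2⌋`, and this is beaten by the coefficient `2^(ν+1-j) C(ν+1, j)`
of `(X + 2)^(ν+1)`. The `j`-th Taylor coefficient of `q` at `2` is therefore positive.
-/

open Polynomial

theorem Nat.choose_sub_le_choose_two_mul (m i : ℕ) : (m - i).choose i ≤ m.choose (2 * i) := by
  rcases lt_or_ge m (2 * i) with hm | hm
  · rw [Nat.choose_eq_zero_of_lt (by omega)]
    exact Nat.zero_le _
  have hmul : m.choose i * (m - i).choose i = m.choose (2 * i) * (2 * i).choose i := by
    rw [Nat.choose_mul (by omega), show 2 * i - i = i by omega]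
  refine Nat.le_of_mul_le_mul_left ?_ (Nat.choose_pos (by omega : i ≤ m))
  calc m.choose i * (m - i).choose i = m.choose (2 * i) * (2 * i).choose i := hmul
    _ ≤ m.choose (2 * i) * m.choose i := Nat.mul_le_mul_left _ (Nat.choose_le_choose i hm)
    _ = m.choose i * m.choose (2 * i) := Nat.mul_comm _ _

theorem Nat.two_mul_choose_add_choose_lt_four_pow_mul (m i : ℕ) (hi : 1 ≤ i)
    (him : 2 * i ≤ m) :
    2 * (m - i).choose i + (m - i).choose (i - 1) < 4 ^ i * m.choose (2 * i) := by
  have hpred : (m - i).choose (i - 1) ≤ i * (m - i).choose i := by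
    have h := Nat.choose_succ_right_eq (m - i) (i - 1)
    rw [Nat.sub_add_cancel hi] at h
    calc (m - i).choose (i - 1) ≤ (m - i).choose (i - 1) * (m - i - (i - 1)) :=
          Nat.le_mul_of_pos_right _ (by omega)
      _ = i * (m - i).choose i := by rw [← h, Nat.mul_comm]
  have hle := Nat.choose_sub_le_choose_two_mul m i
  have hpow : i + 2 < 4 ^ i := by
    have : i < 2 ^ i := Nat.lt_two_pow_self
    rw [show 4 ^ i = 2 ^ i * 2 ^ i by rw [← mul_pow]; norm_num]
    nlinarith
  calc 2 * (m - i).choose i + (m - i).choose (i - 1) ≤ (i + 2) * m.choose (2 * i) := by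
        nlinarith
    _ < 4 ^ i * m.choose (2 * i) := Nat.mul_lt_mul_of_pos_right hpow (Nat.choose_pos him)

theorem Nat.choose_lt_two_pow_mul_choose_succ (m e : ℕ) (he : 2 * e ≤ m) :
    (m - e).choose e < 2 ^ (2 * e + 1) * (m + 1).choose (2 * e + 1) := by
  have hpos : 0 < (m + 1).choose (2 * e + 1) := Nat.choose_pos (by omega)
  calc (m - e).choose e ≤ m.choose (2 * e) := Nat.choose_sub_le_choose_two_mul m e
    _ ≤ (m + 1).choose (2 * e + 1) := by rw [Nat.choose_succ_succ]; omega
    _ < 2 ^ (2 * e + 1) * (m + 1).choose (2 * e + 1) :=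
      lt_mul_left hpos (Nat.one_lt_two_pow (by omega))

def recurrenceCoeffBound (m j : ℕ) : ℕ := (m - (m - j) / 2).choose ((m - j) / 2)

theorem recurrenceCoeffBound_zero_le (m : ℕ) :
    recurrenceCoeffBound m 0 ≤ recurrenceCoeffBound (m + 2) 0 := by
  unfold recurrenceCoeffBound
  rw [show (m + 2 - 0) / 2 = m / 2 + 1 by omega,
    show m + 2 - (m / 2 + 1) = m - m / 2 + 1 by omega, Nat.choose_succ_succ, Nat.sub_zero]
  exact Nat.le_add_right _ _

theorem recurrenceCoeffBound_le_succ_succ (m j : ℕ) :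
    recurrenceCoeffBound (m + 1) j ≤ recurrenceCoeffBound (m + 2) (j + 1) := by
  unfold recurrenceCoeffBound
  rw [show m + 2 - (j + 1) = m + 1 - j by omega]
  exact Nat.choose_le_choose _ (by omega)

theorem recurrenceCoeffBound_add {m j : ℕ} (h : j < m) :
    recurrenceCoeffBound (m + 1) j + recurrenceCoeffBound m (j + 1) =
      recurrenceCoeffBound (m + 2) (j + 1) := by
  obtain ⟨k, hk⟩ : ∃ k, (m + 1 - j) / 2 = k + 1 := ⟨(m + 1 - j) / 2 - 1, by omega⟩
  unfold recurrenceCoeffBound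
  rw [show m + 2 - (j + 1) = m + 1 - j by omega, show (m - (j + 1)) / 2 = k by omega, hk,
    show m + 1 - (k + 1) = m - k by omega, show m + 2 - (k + 1) = m - k + 1 by omega,
    Nat.choose_succ_succ', Nat.add_comm]

section ThreeTermRecurrence

variable {f : ℕ → ℝ[X]}

theorem natDegree_le_of_recurrence (hf : ∀ m, f (m + 2) = X * f (m + 1) - f m)
    (h0 : (f 0).natDegree = 0) (h1 : (f 1).natDegree ≤ 1) (m : ℕ) : (f m).natDegree ≤ m := by
  induction m using Nat.twoStepInduction with
  | zero => exact h0.le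
  | one => exact h1
  | more m ih0 ih1 =>
    rw [hf]
    refine (natDegree_sub_le _ _).trans (max_le ?_ (by omega))
    exact natDegree_mul_le.trans (by rw [natDegree_X]; omega)

theorem abs_coeff_le_of_recurrence {c : ℝ} (hf : ∀ m, f (m + 2) = X * f (m + 1) - f m)
    (hdeg : ∀ m, (f m).natDegree ≤ m) (h0 : ∀ j, |(f 0).coeff j| ≤ c)
    (h1 : ∀ j, |(f 1).coeff j| ≤ c) (m j : ℕ) :
    |(f m).coeff j| ≤ c * recurrenceCoeffBound m j := by
  have hc : 0 ≤ c := (abs_nonneg _).trans (h0 0)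
  induction m using Nat.twoStepInduction generalizing j with
  | zero => simpa [recurrenceCoeffBound] using h0 j
  | one => simpa [recurrenceCoeffBound, show (1 - j) / 2 = 0 by omega] using h1 j
  | more m ih0 ih1 =>
    rw [hf, coeff_sub]
    rcases j with _ | j
    · rw [mul_coeff_zero, coeff_X_zero, zero_mul, zero_sub, abs_neg]
      exact (ih0 0).trans (by gcongr; exact recurrenceCoeffBound_zero_le m)
    rw [coeff_X_mul]
    rcases lt_or_ge j m with hj | hj
    · calc |(f (m + 1)).coeff j - (f m).coeff (j + 1)|
          ≤ |(f (m + 1)).coeff j| + |(f m).coeff (j + 1)| := abs_sub _ _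
        _ ≤ c * recurrenceCoeffBound (m + 1) j + c * recurrenceCoeffBound m (j + 1) :=
          add_le_add (ih1 j) (ih0 _)
        _ = c * recurrenceCoeffBound (m + 2) (j + 1) := by
          rw [← recurrenceCoeffBound_add hj, Nat.cast_add, mul_add]
    · rw [coeff_eq_zero_of_natDegree_lt ((hdeg m).trans_lt (by omega)), sub_zero]
      exact (ih1 j).trans (by gcongr; exact recurrenceCoeffBound_le_succ_succ m j)

end ThreeTermRecurrence

theorem dickson_one_one_zero_eq_C : dickson 1 (1 : ℝ) 0 = C 2 := by
  rw [dickson_zero, map_ofNat C 2]; norm_num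

theorem dickson_one_one_add_two (m : ℕ) :
    dickson 1 (1 : ℝ) (m + 2) = X * dickson 1 1 (m + 1) - dickson 1 1 m := by
  rw [dickson_add_two, C_1, one_mul]

theorem coeff_dickson_one_one_eq_zero {m j : ℕ} (h : Odd (m + j)) :
    (dickson 1 (1 : ℝ) m).coeff j = 0 := by
  rw [Nat.odd_iff] at h
  induction m using Nat.twoStepInduction generalizing j with
  | zero => rw [dickson_one_one_zero_eq_C, coeff_C, if_neg (by omega)]
  | one => rw [dickson_one, coeff_X, if_neg (by omega)]
  | more m ih0 ih1 =>
    rw [dickson_one_one_add_two, coeff_sub]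
    rcases j with _ | j
    · rw [mul_coeff_zero, coeff_X_zero, zero_mul, ih0 (by omega), sub_zero]
    · rw [coeff_X_mul, ih1 (by omega), ih0 (by omega), sub_zero]

theorem abs_coeff_dickson_one_one_le (m j : ℕ) :
    |(dickson 1 (1 : ℝ) m).coeff j| ≤ 2 * recurrenceCoeffBound m j := by
  have h0 (j : ℕ) : |(dickson 1 (1 : ℝ) 0).coeff j| ≤ 2 := by
    rw [dickson_one_one_zero_eq_C, coeff_C]; split_ifs <;> norm_num
  have h1 (j : ℕ) : |(dickson 1 (1 : ℝ) 1).coeff j| ≤ 2 := by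
    rw [dickson_one, coeff_X]; split_ifs <;> norm_num
  have hdeg := natDegree_le_of_recurrence dickson_one_one_add_two
    (by rw [dickson_one_one_zero_eq_C, natDegree_C]) (by rw [dickson_one]; exact natDegree_X_le)
  exact abs_coeff_le_of_recurrence dickson_one_one_add_two hdeg h0 h1 m j

/-- Chebyshev polynomials of the third kind, rescaled as `dickson 1 1` rescales those of the
first kind: `chebyshevV m (2 cos θ) = cos ((2m+1)θ/2) / cos (θ/2)`. -/
noncomputable def chebyshevV : ℕ → ℝ[X]
  | 0 => 1
  | 1 => X - 1
  | m + 2 => X * chebyshevV (m + 1) - chebyshevV m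

theorem chebyshevV_add_two (m : ℕ) :
    chebyshevV (m + 2) = X * chebyshevV (m + 1) - chebyshevV m := rfl

theorem chebyshevV_eval_sq_add_sq {a b : ℝ} (hab : a * b = 1) (m : ℕ) :
    (chebyshevV m).eval (a ^ 2 + b ^ 2) * (a + b) = a ^ (2 * m + 1) + b ^ (2 * m + 1) := by
  induction m using Nat.twoStepInduction with
  | zero => simp [chebyshevV]
  | one =>
    simp only [chebyshevV, eval_sub, eval_X, eval_one]
    linear_combination (a + b) * hab
  | more m ih0 ih1 =>
    rw [chebyshevV_add_two, eval_sub, eval_mul, eval_X]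
    linear_combination (a ^ 2 + b ^ 2) * ih1 - ih0 +
      (a * b + 1) * (a ^ (2 * m + 1) + b ^ (2 * m + 1)) * hab

theorem abs_coeff_chebyshevV_le (m j : ℕ) :
    |(chebyshevV m).coeff j| ≤ recurrenceCoeffBound m j := by
  have h0 (j : ℕ) : |(chebyshevV 0).coeff j| ≤ 1 := by
    rw [chebyshevV, coeff_one]; split_ifs <;> norm_num
  have h1 (j : ℕ) : |(chebyshevV 1).coeff j| ≤ 1 := by
    rw [chebyshevV, coeff_sub, coeff_X, coeff_one]; split_ifs <;> norm_num
  have hdeg := natDegree_le_of_recurrence chebyshevV_add_two natDegree_one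
    (natDegree_sub_le_of_le natDegree_X_le natDegree_one.le)
  simpa using abs_coeff_le_of_recurrence chebyshevV_add_two hdeg h0 h1 m j

theorem eval_sq_mul_pow_of_mul_eq_one {n ν ρ : ℕ} (hnν : n = 2 * ν + ρ) {x : ℕ → ℝ}
    (hx : ∀ u v : ℝ, (u + v) ^ (n + 2) - u ^ (n + 2) - v ^ (n + 2) =
      u * v * ∑ j ∈ Finset.range (ν + 1), x j * (u + v) ^ (n - 2 * j) * (u * v) ^ j)
    {u v : ℝ} (huv : u * v = 1) :
    (∑ j ∈ Finset.range (ν + 1), C (x j) * X ^ (ν - j)).eval ((u + v) ^ 2) * (u + v) ^ ρ =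
      (u + v) ^ (n + 2) - u ^ (n + 2) - v ^ (n + 2) := by
  rw [hx, huv, eval_finsetSum, Finset.sum_mul, one_mul]
  refine Finset.sum_congr rfl fun j hj => ?_
  rw [Finset.mem_range] at hj
  rw [one_pow, mul_one, eval_mul, eval_C, eval_pow, eval_X, ← pow_mul, mul_assoc, ← pow_add,
    show 2 * (ν - j) + ρ = n - 2 * j by omega]

theorem taylor_two_eq {n ν ρ : ℕ} (hρ : ρ ≤ 1) (hnν : n = 2 * ν + ρ) {x : ℕ → ℝ}
    (hx : ∀ u v : ℝ, (u + v) ^ (n + 2) - u ^ (n + 2) - v ^ (n + 2) =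
      u * v * ∑ j ∈ Finset.range (ν + 1), x j * (u + v) ^ (n - 2 * j) * (u * v) ^ j) :
    taylor 2 (∑ j ∈ Finset.range (ν + 1), C (x j) * X ^ (ν - j)) =
      (X + C 2) ^ (ν + 1) - dickson 1 1 (ν + 1) + C (ρ : ℝ) * chebyshevV ν := by
  apply eq_of_infinite_eval_eq
  refine Set.Infinite.mono ?_
    (Set.infinite_of_not_bddAbove (s := (fun a : ℝ => a ^ 2 + a⁻¹ ^ 2) '' Set.Ioi 1) ?_)
  · rintro _ ⟨a, ha, rfl⟩
    have ha0 : 0 < a := zero_lt_one.trans ha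
    have hab : a * a⁻¹ = 1 := mul_inv_cancel₀ ha0.ne'
    have hw0 : a + a⁻¹ ≠ 0 := by positivity
    have hq := eval_sq_mul_pow_of_mul_eq_one hnν hx hab
    have hD := dickson_one_one_eval_add_inv (a ^ 2) (a⁻¹ ^ 2)
      (by rw [← mul_pow, hab, one_pow]) (ν + 1)
    have hV := chebyshevV_eval_sq_add_sq hab ν
    have hs : a ^ 2 + a⁻¹ ^ 2 + 2 = (a + a⁻¹) ^ 2 := by linear_combination (-2) * hab
    simp only [Set.mem_ofPred_eq, taylor_eval, eval_add, eval_sub, eval_mul, eval_pow, eval_C,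
      eval_X, hs, hD]
    -- atoms for `a⁻¹` and `a + a⁻¹` keep `ring` from expanding powers of the sum
    generalize a⁻¹ = b at *
    generalize hw : a + b = w at *
    obtain rfl | rfl : ρ = 0 ∨ ρ = 1 := by omega
    · subst hnν
      linear_combination hq
    · subst hnν
      refine mul_right_cancel₀ hw0 ?_
      linear_combination hq - hV - (a ^ (2 * ν + 2) + b ^ (2 * ν + 2)) * hw +
        (a ^ (2 * ν + 1) + b ^ (2 * ν + 1)) * hab
  · refine not_bddAbove_iff.mpr fun M => ⟨_, ⟨max M 1 + 1, by simp, rfl⟩, ?_⟩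
    nlinarith [le_max_left M 1, le_max_right M 1]

theorem coeff_pow_sub_dickson_add_chebyshevV_pos {ν j : ℕ} (hj : j ≤ ν) {r : ℝ}
    (hr0 : 0 ≤ r) (hr1 : r ≤ 1) :
    0 < ((X + C 2) ^ (ν + 1) - dickson 1 1 (ν + 1) + C r * chebyshevV ν).coeff j := by
  rw [coeff_add, coeff_sub, coeff_C_mul, coeff_X_add_C_pow]
  have hV : -(recurrenceCoeffBound ν j : ℝ) ≤ r * (chebyshevV ν).coeff j := by
    have hrV : |r * (chebyshevV ν).coeff j| ≤ |(chebyshevV ν).coeff j| := by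
      rw [abs_mul, abs_of_nonneg hr0]
      exact mul_le_of_le_one_left (abs_nonneg _) hr1
    linarith [neg_abs_le (r * (chebyshevV ν).coeff j), abs_coeff_chebyshevV_le ν j]
  obtain ⟨i, hi | hi⟩ := Nat.even_or_odd' (ν + 1 - j)
  · have hD := abs_coeff_dickson_one_one_le (ν + 1) j
    rw [show recurrenceCoeffBound (ν + 1) j = (ν + 1 - i).choose i by
      unfold recurrenceCoeffBound; congr 1 <;> omega] at hD
    rw [show recurrenceCoeffBound ν j = (ν + 1 - i).choose (i - 1) by
      unfold recurrenceCoeffBound; congr 1 <;> omega] at hV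
    have key : (2 * (ν + 1 - i).choose i + (ν + 1 - i).choose (i - 1) : ℝ) <
        4 ^ i * (ν + 1).choose (2 * i) := by
      exact_mod_cast
        Nat.two_mul_choose_add_choose_lt_four_pow_mul (ν + 1) i (by omega) (by omega)
    rw [hi, Nat.choose_symm_of_eq_add (by omega : ν + 1 = j + 2 * i), pow_mul,
      show (2 : ℝ) ^ 2 = 4 by norm_num]
    linarith [le_abs_self ((dickson 1 (1 : ℝ) (ν + 1)).coeff j)]
  · rw [coeff_dickson_one_one_eq_zero (by rw [Nat.odd_iff]; omega)]
    rw [show recurrenceCoeffBound ν j = (ν - i).choose i by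
      unfold recurrenceCoeffBound; congr 1 <;> omega] at hV
    have key : ((ν - i).choose i : ℝ) < 2 ^ (2 * i + 1) * (ν + 1).choose (2 * i + 1) := by
      exact_mod_cast Nat.choose_lt_two_pow_mul_choose_succ ν i (by omega)
    rw [hi, Nat.choose_symm_of_eq_add (by omega : ν + 1 = j + (2 * i + 1))]
    linarith

theorem iterate_derivative_eval_eq_factorial_mul_coeff_taylor (q : ℝ[X]) (r : ℝ) (j : ℕ) :
    (derivative^[j] q).eval r = j.factorial * (taylor r q).coeff j := by
  rw [taylor_coeff, ← factorial_smul_hasseDeriv, LinearMap.smul_apply, nsmul_eq_mul, eval_mul,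
    eval_natCast]

theorem lemma_3_8_general (n ν ρ : ℕ) (hρ : ρ ≤ 1) (hnν : n = 2 * ν + ρ)
    (x : ℕ → ℝ)
    (hx : ∀ u v : ℝ, (u + v) ^ (n + 2) - u ^ (n + 2) - v ^ (n + 2) =
      u * v * ∑ j ∈ Finset.range (ν + 1), x j * (u + v) ^ (n - 2 * j) * (u * v) ^ j)
    (q : Polynomial ℝ)
    (hq : q = ∑ j ∈ Finset.range (ν + 1), C (x j) * X ^ (ν - j)) :
    ∀ j ≤ ν, 0 < (derivative^[j] q).eval 2 := by
  intro j hj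
  rw [iterate_derivative_eval_eq_factorial_mul_coeff_taylor, hq, taylor_two_eq hρ hnν hx]
  exact mul_pos (by positivity)
    (coeff_pow_sub_dickson_add_chebyshevV_pos hj ρ.cast_nonneg (by exact_mod_cast hρ))

/-- Lemma 3.8: all derivatives at `y = 2` of the polynomial
`q(y) = ∑_{j=0}^{ν} x_j y^{ν−j}` are strictly positive, where the `x_j` are defined by
`((u+v)^{n+2} − u^{n+2} − v^{n+2}) = uv ∑_j x_j (u+v)^{n−2j}(uv)^j`. -/
theorem lemma_3_8 (n ν ρ : ℕ) (hn : 2 ≤ n) (hρ : ρ ≤ 1) (hnν : n = 2 * ν + ρ)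
    (x : ℕ → ℝ)
    (hx : ∀ u v : ℝ, (u + v) ^ (n + 2) - u ^ (n + 2) - v ^ (n + 2) =
      u * v * ∑ j ∈ Finset.range (ν + 1), x j * (u + v) ^ (n - 2 * j) * (u * v) ^ j)
    (q : Polynomial ℝ)
    (hq : q = ∑ j ∈ Finset.range (ν + 1), C (x j) * X ^ (ν - j)) :
    ∀ j ≤ ν, 0 < (derivative^[j] q).eval 2 :=
  lemma_3_8_general n ν ρ hρ hnν x hx q hq
end

section
/- Let n ≥ 2, a ≥ 2, b, τ ≥ 1, σ integers with σ/τ = e > 0, and set l = aσ − bτ. If e → ∞ (with a, b, n, τ fixed), then the quantity d·binomial(α−1, n−2)·γ(n,d,σ,τ,l)/(2τ²n(n−1)) from Proposition 2.8, where l − σ = ατ + β with 0 ≤ β < τ, is asymptotically equal to (d/(2·n!))·(a−1)^{n−1}(2a+n−2)·e^n + d·O(e^{n−1}). -/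
private lemma abs_quad_le (c0 c1 c2 δ D : ℝ) (h : |δ| ≤ D) :
    |c0 + c1 * δ + c2 * δ ^ 2| ≤ |c0| + |c1| * D + |c2| * D ^ 2 := by
  have h2 : |δ| ^ 2 ≤ D ^ 2 := pow_le_pow_left₀ (abs_nonneg _) h 2
  calc |c0 + c1 * δ + c2 * δ ^ 2| ≤ |c0| + |c1 * δ| + |c2 * δ ^ 2| := abs_add_three _ _ _
    _ = |c0| + |c1| * |δ| + |c2| * |δ| ^ 2 := by rw [abs_mul, abs_mul, abs_pow]
    _ ≤ |c0| + |c1| * D + |c2| * D ^ 2 := by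
        refine add_le_add (add_le_add le_rfl ?_) ?_
        · exact mul_le_mul_of_nonneg_left h (abs_nonneg _)
        · exact mul_le_mul_of_nonneg_left h2 (abs_nonneg _)

private lemma cast_choose_eq (m k : ℕ) (h : k ≤ m) :
    ((m.choose k : ℕ) : ℝ) = (∏ i ∈ Finset.range k, ((m : ℝ) - (i : ℝ))) / (k.factorial : ℝ) := by
  have h1 : ((m.descFactorial k : ℕ) : ℝ) = ∏ i ∈ Finset.range k, ((m : ℝ) - (i : ℝ)) := by
    rw [Nat.descFactorial_eq_prod_range, Nat.cast_prod]
    refine Finset.prod_congr rfl fun i hi => ?_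
    have hi' : i ≤ m := le_of_lt (lt_of_lt_of_le (Finset.mem_range.mp hi) h)
    exact Nat.cast_sub hi'
  rw [eq_div_iff (by exact_mod_cast k.factorial_ne_zero)]
  rw [← h1, Nat.descFactorial_eq_factorial_mul_choose]
  push_cast
  ring

private lemma prod_sub_pow_bound (u : ℕ → ℝ) (A M : ℝ) (hA : 0 ≤ A) (hM : 0 ≤ M) :
    ∀ k : ℕ, (∀ i, i < k → |u i - A| ≤ M) →
      |(∏ i ∈ Finset.range k, u i) - A ^ k| ≤ (k : ℝ) * M * (A + M) ^ (k - 1)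
  | 0, _ => by simp
  | (k+1), h => by
    have hk : ∀ i, i < k → |u i - A| ≤ M := fun i hi => h i (Nat.lt_succ_of_lt hi)
    have ih := prod_sub_pow_bound u A M hA hM k hk
    have habs : ∀ i, i < k + 1 → |u i| ≤ A + M := by
      intro i hi
      calc |u i| = |A + (u i - A)| := by congr 1; ring
        _ ≤ |A| + |u i - A| := abs_add_le _ _
        _ ≤ A + M := add_le_add (le_of_eq (abs_of_nonneg hA)) (h i hi)
    have huk : |u k| ≤ A + M := habs k (Nat.lt_succ_self k)
    have h3 : (A + M) * ((k:ℝ) * M * (A + M) ^ (k - 1)) ≤ (k:ℝ) * M * (A + M) ^ k := by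
      cases k with
      | zero => simp
      | succ k' =>
        simp only [Nat.add_sub_cancel]
        rw [pow_succ]
        exact le_of_eq (by ring)
    rw [Finset.prod_range_succ]
    simp only [Nat.add_sub_cancel]
    calc |(∏ i ∈ Finset.range k, u i) * u k - A ^ (k+1)|
        = |u k * ((∏ i ∈ Finset.range k, u i) - A ^ k) + (u k - A) * A ^ k| := by congr 1; ring
      _ ≤ |u k * ((∏ i ∈ Finset.range k, u i) - A ^ k)| + |(u k - A) * A ^ k| := abs_add_le _ _
      _ ≤ (A + M) * ((k:ℝ) * M * (A + M) ^ (k - 1)) + M * (A + M) ^ k := by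
          rw [abs_mul, abs_mul]
          refine add_le_add (mul_le_mul huk ih (abs_nonneg _) (by linarith)) ?_
          rw [abs_pow, abs_of_nonneg hA]
          exact mul_le_mul (h k (Nat.lt_succ_self k)) (pow_le_pow_left₀ hA (by linarith) k)
            (by positivity) hM
      _ ≤ (k:ℝ) * M * (A + M) ^ k + M * (A + M) ^ k := add_le_add h3 le_rfl
      _ = ((k + 1 : ℕ) : ℝ) * M * (A + M) ^ k := by push_cast; ring

private lemma pow_e_bound (k : ℕ) (Mq Q W c e : ℝ) (hM : 0 ≤ Mq) (hQ : 0 ≤ Q)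
    (hc : 0 ≤ c) (he : 1 ≤ e) (hQW : Q ≤ W * e) :
    ((k:ℝ) * Mq * Q ^ (k - 1)) * (c * e ^ 2) ≤ (k:ℝ) * Mq * W ^ (k - 1) * c * e ^ (k + 1) := by
  cases k with
  | zero => simp
  | succ k' =>
    simp only [Nat.add_sub_cancel]
    have h3 : Q ^ k' ≤ W ^ k' * e ^ k' := by
      rw [← mul_pow]; exact pow_le_pow_left₀ hQ hQW k'
    have h4 : ((k' + 1 : ℕ):ℝ) * Mq * Q ^ k' ≤ ((k' + 1 : ℕ):ℝ) * Mq * (W ^ k' * e ^ k') := by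
      refine mul_le_mul_of_nonneg_left h3 (by positivity)
    have h5 := mul_le_mul_of_nonneg_right h4 (by positivity : (0:ℝ) ≤ c * e ^ 2)
    refine le_trans h5 (le_of_eq ?_)
    ring

private noncomputable def cN (k : ℕ) : ℝ := (k : ℝ) + 2
private noncomputable def c10 (k a : ℕ) (b : ℤ) : ℝ :=
  -2 + 2*(a:ℝ) + 3*cN k + 3*cN k*(b:ℝ) - 3*cN k*(a:ℝ) - 2*cN k*(a:ℝ)*(b:ℝ)
    - (cN k)^2 - (cN k)^2*(b:ℝ) + (cN k)^2*(a:ℝ)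
private noncomputable def c11 (k a : ℕ) : ℝ :=
  -4 + 4*(a:ℝ) + 4*cN k - 2*cN k*(a:ℝ) - (cN k)^2
private noncomputable def c00 (k : ℕ) (b : ℤ) : ℝ :=
  -(2*cN k*(b:ℝ)) - cN k*(b:ℝ)^2 + 3*(cN k)^2*(b:ℝ) + (cN k)^2*(b:ℝ)^2 - (cN k)^3*(b:ℝ)
private noncomputable def c01 (k : ℕ) (b : ℤ) : ℝ :=
  2 - 5*cN k + 4*(cN k)^2 - (cN k)^3 - 4*cN k*(b:ℝ) + 2*(cN k)^2*(b:ℝ)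
private noncomputable def c02 (k : ℕ) : ℝ := 2 - 3*cN k + (cN k)^2
private noncomputable def cD (b : ℤ) : ℝ := |(b:ℝ)| + 1
private noncomputable def cK (k a : ℕ) (b : ℤ) : ℝ :=
  (|c10 k a b| + |c11 k a| * cD b) + (|c00 k b| + |c01 k b| * cD b + |c02 k| * (cD b)^2)
private noncomputable def cM (k : ℕ) (b : ℤ) : ℝ := |(b:ℝ)| + 1 + ((k:ℝ) + 2)
private noncomputable def cB (k a : ℕ) : ℝ := ((a:ℝ) - 1) * (2*(a:ℝ) + cN k - 2)
private noncomputable def cC (k a : ℕ) (b : ℤ) : ℝ :=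
  (k:ℝ) * cM k b * ((a:ℝ) - 1 + cM k b)^(k-1) * (cB k a + cK k a b)
    + ((a:ℝ) - 1)^k * cK k a b + 1


set_option maxHeartbeats 2000000 in
/-- Asymptotic identity (2.12): with `l = aσ − bτ`, `α = ⌊(l−σ)/τ⌋`, `e = σ/τ`,
the lower bound `d·C(α−1, n−2)·γ(n,d,σ,τ,l)/(2τ²n(n−1))` of Proposition 2.8 equals
`(d/(2·n!))·(a−1)^{n−1}(2a+n−2)·e^n + d·O(e^{n−1})` as `e → ∞`, uniformly in `d ≥ 0`:
there are constants `C, e0` depending only on `n, a, b, τ` bounding the difference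
by `C·d·e^{n−1}` for `e ≥ e0`. -/
theorem prop_2_8_asymptotics (n a : ℕ) (hn : 2 ≤ n) (ha : 2 ≤ a) (b τ : ℤ)
    (hτ : 1 ≤ τ) :
    ∃ C e0 : ℝ, 0 < C ∧
      ∀ (σ : ℤ) (d : ℝ), 0 ≤ d → 0 < (σ : ℝ) / τ → e0 ≤ (σ : ℝ) / τ →
        ∀ l α : ℤ, l = a * σ - b * τ → α = (l - σ) / τ →
          |d * ((α.toNat - 1).choose (n - 2) : ℝ) *
                (((n : ℝ) - 2) * ((α : ℝ) - n + 1) *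
                    ((α : ℝ) * (τ : ℝ) ^ 2 * ((n : ℝ) - 1) +
                      (n : ℝ) * τ * ((σ : ℝ) - 2 * l)) +
                  (n : ℝ) * ((n : ℝ) - 1) * (l : ℝ) *
                    ((l : ℝ) - σ - τ * ((n : ℝ) - 2))) /
                (2 * (τ : ℝ) ^ 2 * n * ((n : ℝ) - 1)) -
              d / (2 * (n.factorial : ℝ)) * ((a : ℝ) - 1) ^ (n - 1) *
                (2 * a + (n : ℝ) - 2) * ((σ : ℝ) / τ) ^ n| ≤
            C * d * ((σ : ℝ) / τ) ^ (n - 1) := by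
  obtain ⟨k, rfl⟩ : ∃ k, n = k + 2 := ⟨n - 2, by omega⟩
  have hk0 : (0:ℝ) ≤ (k:ℝ) := Nat.cast_nonneg k
  have ha2 : (2:ℝ) ≤ (a:ℝ) := by exact_mod_cast ha
  have hM0 : (0:ℝ) ≤ cM k b := by rw [cM]; positivity
  have hK0 : (0:ℝ) ≤ cK k a b := by rw [cK, cD]; positivity
  have hB0 : (0:ℝ) ≤ cB k a := by rw [cB, cN]; exact mul_nonneg (by linarith) (by linarith)
  have hC1 : (0:ℝ) ≤ (k:ℝ) * cM k b * ((a:ℝ) - 1 + cM k b)^(k-1) * (cB k a + cK k a b) :=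
    mul_nonneg (mul_nonneg (mul_nonneg hk0 hM0) (pow_nonneg (by linarith) _)) (by linarith)
  have hC2 : (0:ℝ) ≤ ((a:ℝ) - 1)^k * cK k a b :=
    mul_nonneg (pow_nonneg (by linarith) k) hK0
  refine ⟨cC k a b, (k:ℝ) + 2 + |(b:ℝ)| + 2, by rw [cC]; linarith, ?_⟩
  intro σ d hd hepos hee l α hl hα
  have hτ1 : (1:ℝ) ≤ (τ:ℝ) := by exact_mod_cast hτ
  have hτpos : (0:ℝ) < (τ:ℝ) := by linarith
  have hτne : ((τ:ℝ)) ≠ 0 := ne_of_gt hτpos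
  set e := ((σ:ℝ)) / ((τ:ℝ)) with he
  clear_value e
  have hb0 : (0:ℝ) ≤ |(b:ℝ)| := abs_nonneg _
  have he1 : (1:ℝ) ≤ e := by linarith
  have he0 : (0:ℝ) < e := hepos
  have hσe : ((σ:ℝ)) = (τ:ℝ) * e := by rw [he]; field_simp
  have hlcast : ((l:ℝ)) = (a:ℝ) * ((σ:ℝ)) - (b:ℝ) * (τ:ℝ) := by exact_mod_cast hl
  have hle : (l:ℝ) = (τ:ℝ) * ((a:ℝ) * e - (b:ℝ)) := by rw [hlcast, hσe]; ring
  set x := ((α:ℝ)) with hxdef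
  clear_value x
  have hmod := Int.mul_ediv_add_emod (l - σ) τ
  rw [← hα] at hmod
  have hr0' : (0:ℝ) ≤ (((l - σ) % τ : ℤ):ℝ) := by
    exact_mod_cast Int.emod_nonneg (l - σ) (by omega)
  have hr1' : (((l - σ) % τ : ℤ):ℝ) < (τ:ℝ) := by
    exact_mod_cast Int.emod_lt_of_pos (l - σ) (by omega)
  have hcast : (τ:ℝ) * x + (((l - σ) % τ : ℤ):ℝ) = (l:ℝ) - ((σ:ℝ)) := by
    rw [hxdef]; exact_mod_cast hmod
  set δ := x - ((a:ℝ) - 1) * e with hδdef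
  clear_value δ
  have hδτ : (τ:ℝ) * δ = -((τ:ℝ) * (b:ℝ)) - (((l - σ) % τ : ℤ):ℝ) := by
    rw [hδdef]; linear_combination hcast + hle - hσe
  have hδub : δ ≤ -(b:ℝ) := by nlinarith [hδτ, hr0', hτpos]
  have hδlb : -(b:ℝ) - 1 < δ := by nlinarith [hδτ, hr1', hτpos]
  have habsδ : |δ| ≤ cD b := by
    rw [cD, abs_le]
    constructor
    · linarith [le_abs_self ((b:ℝ))]
    · linarith [neg_abs_le ((b:ℝ))]
  have hae : e ≤ ((a:ℝ) - 1) * e := by nlinarith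
  have hxe : x = ((a:ℝ) - 1) * e + δ := by rw [hδdef]; ring
  have hxlb : (k:ℝ) + 3 ≤ x := by
    have h1 := habsδ
    rw [cD] at h1
    have h2 := (abs_le.mp h1).1
    linarith
  have hα0 : (0:ℤ) ≤ α := by
    have : (0:ℝ) ≤ ((α:ℝ)) := by rw [← hxdef]; linarith
    exact_mod_cast this
  set m := α.toNat with hmdef
  clear_value m
  have hmx : (m:ℝ) = x := by
    rw [hmdef, hxdef]
    exact_mod_cast congrArg (fun z : ℤ => (z:ℝ)) (Int.toNat_of_nonneg hα0)
  have hmk : k + 3 ≤ m := by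
    have h1 : (k:ℝ) + 3 ≤ (m:ℝ) := by rw [hmx]; exact hxlb
    exact_mod_cast h1
  have h1m : 1 ≤ m := by omega
  have hm1cast : ((m - 1 : ℕ):ℝ) = x - 1 := by
    rw [Nat.cast_sub h1m, hmx, Nat.cast_one]
  set P := ∏ i ∈ Finset.range k, (x - 1 - (i:ℝ)) with hPdef
  clear_value P
  have hchoose : (((m - 1).choose k : ℕ):ℝ) = P / (k.factorial : ℝ) := by
    rw [cast_choose_eq (m - 1) k (by omega), hPdef]
    congr 1
    exact Finset.prod_congr rfl fun i _ => by rw [hm1cast]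
  have hi2 : k + 2 - 2 = k := by omega
  have hi1 : k + 2 - 1 = k + 1 := by omega
  rw [hi2, hi1, hchoose, hσe, hle]
  set G := (((k:ℝ)+2) - 2) * (x - ((k:ℝ)+2) + 1) *
      (x * (((k:ℝ)+2) - 1) + ((k:ℝ)+2) * (e - 2 * ((a:ℝ) * e - (b:ℝ))))
    + ((k:ℝ)+2) * (((k:ℝ)+2) - 1) * ((a:ℝ) * e - (b:ℝ)) *
      (((a:ℝ) * e - (b:ℝ)) - e - (((k:ℝ)+2) - 2)) with hGdef
  clear_value G
  set A := ((a:ℝ) - 1) * e with hAdef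
  clear_value A
  set Den := 2 * ((k:ℝ)+2) * ((k:ℝ)+1) * ((k.factorial : ℕ):ℝ) with hDenDef
  clear_value Den
  have hfacpos : (0:ℝ) < ((k.factorial : ℕ):ℝ) := by exact_mod_cast k.factorial_pos
  have hf1 : (1:ℝ) ≤ ((k.factorial : ℕ):ℝ) := by
    exact_mod_cast Nat.one_le_iff_ne_zero.mpr k.factorial_ne_zero
  have hDenpos : 0 < Den := by
    rw [hDenDef]
    have h2 : (0:ℝ) < ((k:ℝ)+2) := by linarith
    have h3 : (0:ℝ) < ((k:ℝ)+1) := by linarith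
    exact mul_pos (mul_pos (mul_pos two_pos h2) h3) hfacpos
  have hDen1 : 1 ≤ Den := by
    rw [hDenDef]
    calc (1:ℝ) ≤ 2*((k:ℝ)+2)*((k:ℝ)+1)*1 := by nlinarith [hk0]
      _ ≤ 2*((k:ℝ)+2)*((k:ℝ)+1)*((k.factorial : ℕ):ℝ) := by
          refine mul_le_mul_of_nonneg_left hf1 (by nlinarith [hk0])
  have hA0 : (0:ℝ) ≤ A := by
    rw [hAdef]; exact mul_nonneg (by linarith) (le_of_lt he0)
  have hfactors : ∀ i, i < k → |x - 1 - (i:ℝ) - A| ≤ cM k b := by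
    intro i hi
    have hik : (i:ℝ) < (k:ℝ) := by exact_mod_cast hi
    have hi0 : (0:ℝ) ≤ (i:ℝ) := Nat.cast_nonneg i
    have heq : x - 1 - (i:ℝ) - A = δ - 1 - (i:ℝ) := by rw [hδdef]; ring
    rw [heq, cM, abs_le]
    have h1 := habsδ
    rw [cD] at h1
    have h3 := abs_le.mp h1
    exact ⟨by linarith [h3.1], by linarith [h3.2]⟩
  have hP_A : |P - A ^ k| ≤ (k:ℝ) * cM k b * (A + cM k b) ^ (k - 1) := by
    have h5 := prod_sub_pow_bound (fun i => x - 1 - (i:ℝ)) A (cM k b) hA0 hM0 k hfactors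
    simpa [hPdef] using h5
  have hGBid : G - cB k a * e^2 =
      (c10 k a b + c11 k a * δ) * e + (c00 k b + c01 k b * δ + c02 k * δ^2) := by
    rw [hGdef, cB, c10, c11, c00, c01, c02, cN, hxe, hAdef]
    ring
  have hGB : |G - cB k a * e^2| ≤ cK k a b * e := by
    rw [hGBid]
    have h1 := abs_quad_le (c10 k a b) (c11 k a) 0 δ (cD b) habsδ
    simp only [zero_mul, add_zero, abs_zero] at h1
    have h2 := abs_quad_le (c00 k b) (c01 k b) (c02 k) δ (cD b) habsδ
    have hD0 : (0:ℝ) ≤ cD b := by rw [cD]; positivity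
    calc |(c10 k a b + c11 k a * δ) * e + (c00 k b + c01 k b * δ + c02 k * δ^2)|
        ≤ |(c10 k a b + c11 k a * δ) * e| + |c00 k b + c01 k b * δ + c02 k * δ^2| :=
          abs_add_le _ _
      _ = |c10 k a b + c11 k a * δ| * e + |c00 k b + c01 k b * δ + c02 k * δ^2| := by
          rw [abs_mul, abs_of_pos he0]
      _ ≤ (|c10 k a b| + |c11 k a| * cD b) * e
            + (|c00 k b| + |c01 k b| * cD b + |c02 k| * (cD b)^2) :=
          add_le_add (mul_le_mul_of_nonneg_right h1 (le_of_lt he0)) h2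
      _ ≤ cK k a b * e := by
          rw [cK]
          have hL0 : (0:ℝ) ≤ |c00 k b| + |c01 k b| * cD b + |c02 k| * (cD b)^2 := by positivity
          linarith [mul_nonneg hL0 (by linarith : (0:ℝ) ≤ e - 1)]
  have hGabs : |G| ≤ (cB k a + cK k a b) * e^2 := by
    have h3 : |G| ≤ |cB k a * e^2| + |G - cB k a * e^2| := by
      calc |G| = |cB k a * e^2 + (G - cB k a * e^2)| := by congr 1; ring
        _ ≤ _ := abs_add_le _ _
    rw [abs_mul, abs_of_nonneg hB0, abs_of_nonneg (by positivity : (0:ℝ) ≤ e^2)] at h3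
    linarith [h3, hGB, mul_nonneg (mul_nonneg hK0 (le_of_lt he0))
      (by linarith : (0:ℝ) ≤ e - 1)]
  have hAk : A^k = ((a:ℝ)-1)^k * e^k := by rw [hAdef, mul_pow]
  have hsplit : P * G - ((a:ℝ)-1)^(k+1) * (2*(a:ℝ) + ((k:ℝ)+2) - 2) * e^(k+2)
      = (P - A^k) * G + A^k * (G - cB k a * e^2) := by
    rw [hAk, cB, cN]; ring
  have hcore : |P * G - ((a:ℝ)-1)^(k+1) * (2*(a:ℝ) + ((k:ℝ)+2) - 2) * e^(k+2)|
      ≤ (cC k a b - 1) * e^(k+1) := by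
    rw [hsplit]
    have t1 : |(P - A^k) * G|
        ≤ ((k:ℝ) * cM k b * (A + cM k b)^(k-1)) * ((cB k a + cK k a b) * e^2) := by
      rw [abs_mul]
      refine mul_le_mul hP_A hGabs (abs_nonneg _) ?_
      exact mul_nonneg (mul_nonneg hk0 hM0) (pow_nonneg (by linarith) _)
    have t1' : ((k:ℝ) * cM k b * (A + cM k b)^(k-1)) * ((cB k a + cK k a b) * e^2)
        ≤ (k:ℝ) * cM k b * ((a:ℝ) - 1 + cM k b)^(k-1) * (cB k a + cK k a b) * e^(k+1) := by
      refine pow_e_bound k (cM k b) (A + cM k b) ((a:ℝ) - 1 + cM k b) (cB k a + cK k a b) e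
        hM0 (by linarith) (by linarith) he1 ?_
      rw [hAdef]
      linarith [mul_nonneg hM0 (by linarith : (0:ℝ) ≤ e - 1)]
    have t2 : |A^k * (G - cB k a * e^2)| ≤ ((a:ℝ)-1)^k * cK k a b * e^(k+1) := by
      rw [abs_mul, abs_pow, abs_of_nonneg hA0]
      calc A^k * |G - cB k a * e^2| ≤ A^k * (cK k a b * e) :=
            mul_le_mul_of_nonneg_left hGB (pow_nonneg hA0 k)
        _ = ((a:ℝ)-1)^k * cK k a b * e^(k+1) := by rw [hAk]; ring
    calc |(P - A^k) * G + A^k * (G - cB k a * e^2)|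
        ≤ |(P - A^k) * G| + |A^k * (G - cB k a * e^2)| := abs_add_le _ _
      _ ≤ (k:ℝ) * cM k b * ((a:ℝ) - 1 + cM k b)^(k-1) * (cB k a + cK k a b) * e^(k+1)
            + ((a:ℝ)-1)^k * cK k a b * e^(k+1) := add_le_add (le_trans t1 t1') t2
      _ = (cC k a b - 1) * e^(k+1) := by rw [cC]; ring
  have hfin : |d * P * G / Den
      - d * (((a:ℝ)-1)^(k+1) * (2*(a:ℝ) + ((k:ℝ)+2) - 2) * e^(k+2)) / Den|
      ≤ cC k a b * d * e^(k+1) := by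
    have he2 : d * P * G / Den
        - d * (((a:ℝ)-1)^(k+1) * (2*(a:ℝ) + ((k:ℝ)+2) - 2) * e^(k+2)) / Den
        = d * (P * G - ((a:ℝ)-1)^(k+1) * (2*(a:ℝ) + ((k:ℝ)+2) - 2) * e^(k+2)) / Den := by
      ring
    rw [he2, abs_div, abs_mul, abs_of_nonneg hd, abs_of_pos hDenpos]
    have h9 : d * |P * G - ((a:ℝ)-1)^(k+1) * (2*(a:ℝ) + ((k:ℝ)+2) - 2) * e^(k+2)|
        ≤ d * ((cC k a b - 1) * e^(k+1)) := mul_le_mul_of_nonneg_left hcore hd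
    have h10 : d * |P * G - ((a:ℝ)-1)^(k+1) * (2*(a:ℝ) + ((k:ℝ)+2) - 2) * e^(k+2)| / Den
        ≤ d * |P * G - ((a:ℝ)-1)^(k+1) * (2*(a:ℝ) + ((k:ℝ)+2) - 2) * e^(k+2)| / 1 :=
      div_le_div_of_nonneg_left (by positivity) one_pos hDen1
    rw [div_one] at h10
    have h11 : (0:ℝ) ≤ d * e^(k+1) := mul_nonneg hd (pow_nonneg (le_of_lt he0) _)
    linarith [h9, h10, h11]
  have hfact : (((k+2).factorial : ℕ):ℝ)
      = ((k:ℝ)+2) * (((k:ℝ)+1) * ((k.factorial : ℕ):ℝ)) := by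
    rw [show (k+2).factorial = (k+2) * ((k+1) * k.factorial) from by
      rw [Nat.factorial_succ, Nat.factorial_succ]]
    push_cast
    ring
  have hne2 : ((k:ℝ)+2) ≠ 0 := by positivity
  have hne1 : ((k:ℝ)+1) ≠ 0 := by positivity
  have hne3 : ((k:ℝ)+2) - 1 ≠ 0 := by
    intro hco; linarith
  have hfne : ((k.factorial : ℕ):ℝ) ≠ 0 := ne_of_gt hfacpos
  convert hfin using 2
  rw [hGdef, hDenDef, hfact]
  push_cast
  field_simp
  ring
end
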